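/- arXiv:2001.10707 — 5 statements merged into one kernel-verified Lean document; each statement's English description precedes it below -/
import Mathlib

section
/- Fix a set A ∈ 𝔅 and assume the density of the coupling J_A is symmetric, P_A(−x) = P_A(x) for all x ∈ ℝ. Then (assuming all quenched averages below are finite) the quenched average of the local energy satisfies E[ −J_A ⟨σ_A⟩_J ] ≥ E[ −J_A tanh(β J_A) ]; that is, the quenched local energy is bounded below by the energy of the isolated bond A in the absence of all other interactions. -/
open MeasureTheory Real Finset ProbabilityTheory

/-- The spin value of a Boolean: `true ↦ 1`, `false ↦ -1`. -/
noncomputable def spinVal (b : Bool) : ℝ := if b then 1 else -1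

/-- `σ_B = ∏ i ∈ B, σ_i`. -/
noncomputable def sigmaSet {V : Type} (σ : V → Bool) (B : Finset V) : ℝ :=
  ∏ i ∈ B, spinVal (σ i)

/-- The Gibbs (thermal) average `⟨σ_A⟩_J` at inverse temperature `β` for the Hamiltonian
`H(σ) = -∑_{B ∈ ℬ} J_B σ_B`. -/
noncomputable def gibbsAvg {V : Type} [Fintype V] [DecidableEq V] (β : ℝ)
    (ℬ : Finset (Finset V)) (J : ℬ → ℝ) (A : Finset V) : ℝ :=
  (∑ σ : V → Bool, sigmaSet σ A * Real.exp (β * ∑ B : ℬ, J B * sigmaSet σ (B : Finset V))) /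
  (∑ σ : V → Bool, Real.exp (β * ∑ B : ℬ, J B * sigmaSet σ (B : Finset V)))

/-- The product measure `∏_{B ∈ ℬ} P_B(J_B) dJ_B` of the independent random couplings. -/
noncomputable def quenchedMeasure {V : Type} (ℬ : Finset (Finset V))
    (P : Finset V → ℝ → ℝ) : Measure (ℬ → ℝ) :=
  Measure.pi fun B => volume.withDensity fun x => ENNReal.ofReal (P (B : Finset V) x)

/- ## Auxiliary lemmas -/

lemma key_alg (x u v a b : ℝ) (hu : 0 < u) (hv : 0 < v) (ha : 0 < a) (hb : 0 < b)
    (hx : 0 ≤ x * (u - v)) :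
    0 ≤ x * ((v * a - u * b) / (v * a + u * b) - (u * a - v * b) / (u * a + v * b))
      + 2 * x * ((u - v) / (u + v)) := by
  have d1 : 0 < v * a + u * b := by positivity
  have d2 : 0 < u * a + v * b := by positivity
  have d3 : 0 < u + v := by positivity
  have key : x * ((v * a - u * b) / (v * a + u * b) - (u * a - v * b) / (u * a + v * b))
      + 2 * x * ((u - v) / (u + v))
      = (x * (u - v)) * (2 * u * v * (a - b) ^ 2)
        / ((v * a + u * b) * ((u * a + v * b) * (u + v))) := by
    field_simp
    ring
  rw [key]
  apply div_nonneg
  · apply mul_nonneg hx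
    positivity
  · positivity

lemma sigmaSet_pm {V : Type} [DecidableEq V] (σ : V → Bool) (B : Finset V) :
    sigmaSet σ B = 1 ∨ sigmaSet σ B = -1 := by
  classical
  have hb : ∀ b : Bool, spinVal b = 1 ∨ spinVal b = -1 := by
    intro b; cases b <;> simp [spinVal]
  induction B using Finset.induction_on with
  | empty => exact Or.inl (by simp [sigmaSet])
  | @insert a s ha ih =>
    rw [sigmaSet, Finset.prod_insert ha]
    rw [sigmaSet] at ih
    rcases hb (σ a) with h1 | h1 <;> rcases ih with h2 | h2 <;> rw [h1, h2] <;> norm_num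

lemma tanh_eq_exp (t : ℝ) :
    Real.tanh t = (Real.exp t - Real.exp (-t)) / (Real.exp t + Real.exp (-t)) := by
  rw [Real.tanh_eq_sinh_div_cosh, Real.sinh_eq, Real.cosh_eq]
  have h : Real.exp t + Real.exp (-t) ≠ 0 := by positivity
  field_simp

/-- Weight of the `σ_A = +1` configurations. -/
noncomputable def wplus {V : Type} [Fintype V] [DecidableEq V] (β : ℝ)
    (ℬ : Finset (Finset V)) (i : ℬ) (J : ℬ → ℝ) : ℝ :=
  ∑ σ ∈ Finset.univ.filter (fun σ : V → Bool => sigmaSet σ (i : Finset V) = 1),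
    Real.exp (β * ∑ B ∈ ({i}ᶜ : Finset ℬ), J B * sigmaSet σ (B : Finset V))

/-- Weight of the `σ_A = -1` configurations. -/
noncomputable def wminus {V : Type} [Fintype V] [DecidableEq V] (β : ℝ)
    (ℬ : Finset (Finset V)) (i : ℬ) (J : ℬ → ℝ) : ℝ :=
  ∑ σ ∈ Finset.univ.filter (fun σ : V → Bool => ¬ sigmaSet σ (i : Finset V) = 1),
    Real.exp (β * ∑ B ∈ ({i}ᶜ : Finset ℬ), J B * sigmaSet σ (B : Finset V))

lemma wplus_pos {V : Type} [Fintype V] [DecidableEq V] (β : ℝ)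
    (ℬ : Finset (Finset V)) (i : ℬ) (J : ℬ → ℝ) : 0 < wplus β ℬ i J := by
  apply Finset.sum_pos (fun σ _ => Real.exp_pos _)
  refine ⟨fun _ => true, Finset.mem_filter.2 ⟨Finset.mem_univ _, ?_⟩⟩
  simp [sigmaSet, spinVal]

lemma wminus_pos {V : Type} [Fintype V] [DecidableEq V] (β : ℝ)
    (ℬ : Finset (Finset V)) (i : ℬ) (hne : (i : Finset V).Nonempty) (J : ℬ → ℝ) :
    0 < wminus β ℬ i J := by
  apply Finset.sum_pos (fun σ _ => Real.exp_pos _)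
  obtain ⟨i0, hi0⟩ := hne
  refine ⟨fun j => decide (j ≠ i0), Finset.mem_filter.2 ⟨Finset.mem_univ _, ?_⟩⟩
  have : sigmaSet (fun j => decide (j ≠ i0)) (i : Finset V) = -1 := by
    rw [sigmaSet]
    rw [Finset.prod_eq_single i0]
    · simp [spinVal]
    · intro b _ hbne
      simp [spinVal, hbne]
    · intro h; exact absurd hi0 h
  rw [this]; norm_num

lemma gibbs_formula {V : Type} [Fintype V] [DecidableEq V] (β : ℝ)
    (ℬ : Finset (Finset V)) (i : ℬ) (J : ℬ → ℝ) :
    gibbsAvg β ℬ J (i : Finset V) =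
      (Real.exp (β * J i) * wplus β ℬ i J - Real.exp (-(β * J i)) * wminus β ℬ i J) /
      (Real.exp (β * J i) * wplus β ℬ i J + Real.exp (-(β * J i)) * wminus β ℬ i J) := by
  classical
  have hsplit : ∀ σ : V → Bool,
      Real.exp (β * ∑ B : ℬ, J B * sigmaSet σ (B : Finset V))
        = Real.exp (β * (J i * sigmaSet σ (i : Finset V)))
          * Real.exp (β * ∑ B ∈ ({i}ᶜ : Finset ℬ), J B * sigmaSet σ (B : Finset V)) := by
    intro σ
    rw [Fintype.sum_eq_add_sum_compl i (fun B : ℬ => J B * sigmaSet σ (B : Finset V)),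
      mul_add, Real.exp_add]
  have hden : (∑ σ : V → Bool, Real.exp (β * ∑ B : ℬ, J B * sigmaSet σ (B : Finset V)))
      = Real.exp (β * J i) * wplus β ℬ i J + Real.exp (-(β * J i)) * wminus β ℬ i J := by
    rw [← Finset.sum_filter_add_sum_filter_not Finset.univ
        (fun σ : V → Bool => sigmaSet σ (i : Finset V) = 1)]
    congr 1
    · rw [wplus, Finset.mul_sum]
      refine Finset.sum_congr rfl fun σ hσ => ?_
      have hε : sigmaSet σ (i : Finset V) = 1 := (Finset.mem_filter.1 hσ).2
      rw [hsplit σ, hε, mul_one]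
    · rw [wminus, Finset.mul_sum]
      refine Finset.sum_congr rfl fun σ hσ => ?_
      have hε : sigmaSet σ (i : Finset V) = -1 := by
        rcases sigmaSet_pm σ (i : Finset V) with h | h
        · exact absurd h (Finset.mem_filter.1 hσ).2
        · exact h
      rw [hsplit σ, hε, show β * (J i * (-1 : ℝ)) = -(β * J i) from by ring]
  have hnum : (∑ σ : V → Bool,
        sigmaSet σ (i : Finset V) * Real.exp (β * ∑ B : ℬ, J B * sigmaSet σ (B : Finset V)))
      = Real.exp (β * J i) * wplus β ℬ i J - Real.exp (-(β * J i)) * wminus β ℬ i J := by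
    rw [← Finset.sum_filter_add_sum_filter_not Finset.univ
        (fun σ : V → Bool => sigmaSet σ (i : Finset V) = 1), sub_eq_add_neg]
    congr 1
    · rw [wplus, Finset.mul_sum]
      refine Finset.sum_congr rfl fun σ hσ => ?_
      have hε : sigmaSet σ (i : Finset V) = 1 := (Finset.mem_filter.1 hσ).2
      rw [hsplit σ, hε, mul_one, one_mul]
    · rw [wminus, Finset.mul_sum, ← Finset.sum_neg_distrib]
      refine Finset.sum_congr rfl fun σ hσ => ?_
      have hε : sigmaSet σ (i : Finset V) = -1 := by
        rcases sigmaSet_pm σ (i : Finset V) with h | h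
        · exact absurd h (Finset.mem_filter.1 hσ).2
        · exact h
      rw [hsplit σ, hε, show β * (J i * (-1 : ℝ)) = -(β * J i) from by ring]
      ring
  rw [gibbsAvg, hnum, hden]

lemma pointwise_key {V : Type} [Fintype V] [DecidableEq V]
    (ℬ : Finset (Finset V)) (β : ℝ) (hβ : 0 < β) (i : ℬ)
    (hne : (i : Finset V).Nonempty) (J : ℬ → ℝ) :
    0 ≤ J i * (gibbsAvg β ℬ (fun B => if B = i then -(J B) else J B) (i : Finset V)
        - gibbsAvg β ℬ J (i : Finset V)) + 2 * J i * Real.tanh (β * J i) := by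
  classical
  set K : ℬ → ℝ := fun B => if B = i then -(J B) else J B with hK
  have hKi : K i = -(J i) := by simp [hK]
  have hcompl : ∀ B : ℬ, B ∈ ({i}ᶜ : Finset ℬ) → K B = J B := by
    intro B hB
    have hBi : B ≠ i := by simpa using hB
    simp [hK, hBi]
  have hwp : wplus β ℬ i K = wplus β ℬ i J := by
    unfold wplus
    refine Finset.sum_congr rfl fun σ _ => ?_
    congr 1
    exact congrArg (β * ·) (Finset.sum_congr rfl fun B hB => by rw [hcompl B hB])
  have hwm : wminus β ℬ i K = wminus β ℬ i J := by
    unfold wminus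
    refine Finset.sum_congr rfl fun σ _ => ?_
    congr 1
    exact congrArg (β * ·) (Finset.sum_congr rfl fun B hB => by rw [hcompl B hB])
  rw [gibbs_formula β ℬ i K, gibbs_formula β ℬ i J, hwp, hwm, hKi]
  set x := J i with hx
  set a := wplus β ℬ i J with haa
  set b := wminus β ℬ i J with hbb
  have ha : 0 < a := wplus_pos β ℬ i J
  have hb : 0 < b := wminus_pos β ℬ i hne J
  rw [tanh_eq_exp, show β * -x = -(β * x) from by ring, neg_neg]
  have hsign : 0 ≤ x * (Real.exp (β * x) - Real.exp (-(β * x))) := by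
    rcases le_total 0 x with h | h
    · apply mul_nonneg h
      have : Real.exp (-(β * x)) ≤ Real.exp (β * x) := Real.exp_le_exp.2 (by nlinarith)
      linarith
    · have : Real.exp (β * x) ≤ Real.exp (-(β * x)) := Real.exp_le_exp.2 (by nlinarith)
      nlinarith
  exact key_alg x (Real.exp (β * x)) (Real.exp (-(β * x))) a b (Real.exp_pos _)
    (Real.exp_pos _) ha hb hsign

/-- **Symmetric case.** If the density of `J_A` is symmetric, `P_A(-x) = P_A(x)`, then the
quenched local energy satisfies `E[-J_A ⟨σ_A⟩_J] ≥ E[-J_A tanh(β J_A)]`. -/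
theorem local_energy_lower_bound_symmetric
    {V : Type} [Fintype V] [DecidableEq V]
    (ℬ : Finset (Finset V)) (hℬ : ∀ B ∈ ℬ, B.Nonempty)
    (β : ℝ) (hβ : 0 < β)
    (P : Finset V → ℝ → ℝ)
    (hPmeas : ∀ B, Measurable (P B))
    (hPnonneg : ∀ B x, 0 ≤ P B x)
    (hPone : ∀ B, ∫ x, P B x = 1)
    (A : Finset V) (hA : A ∈ ℬ)
    (hPsym : ∀ x : ℝ, P A (-x) = P A x)
    -- finiteness of the quenched averages
    (hint1 : Integrable (fun J : ℬ → ℝ => -(J ⟨A, hA⟩) * gibbsAvg β ℬ J A)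
      (quenchedMeasure ℬ P))
    (hint2 : Integrable (fun J : ℬ → ℝ => -(J ⟨A, hA⟩) * Real.tanh (β * J ⟨A, hA⟩))
      (quenchedMeasure ℬ P)) :
    ∫ J, -(J ⟨A, hA⟩) * gibbsAvg β ℬ J A ∂(quenchedMeasure ℬ P)
      ≥ ∫ J, -(J ⟨A, hA⟩) * Real.tanh (β * J ⟨A, hA⟩) ∂(quenchedMeasure ℬ P) := by
  classical
  set i : ℬ := ⟨A, hA⟩ with hi
  set μ : Measure (ℬ → ℝ) := quenchedMeasure ℬ P with hμ
  set ν : ℬ → Measure ℝ :=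
    fun B => volume.withDensity fun x => ENNReal.ofReal (P (B : Finset V) x) with hν
  have hμν : μ = Measure.pi ν := rfl
  -- each component is a probability measure
  have hPint : ∀ B : Finset V, Integrable (P B) := by
    intro B
    by_contra h
    have := hPone B
    rw [integral_undef h] at this
    norm_num at this
  have hprob : ∀ B : ℬ, IsProbabilityMeasure (ν B) := by
    intro B
    constructor
    rw [hν]
    rw [withDensity_apply _ MeasurableSet.univ, setLIntegral_univ,
      ← ofReal_integral_eq_lintegral_ofReal (hPint _)
        (Filter.Eventually.of_forall (hPnonneg _)),
      hPone, ENNReal.ofReal_one]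
  haveI : ∀ B : ℬ, SigmaFinite (ν B) := fun B => by
    have := hprob B; infer_instance
  -- the flip map
  set f : ℬ → ℝ → ℝ := fun B x => if B = i then -x else x with hf
  have hfmp : ∀ B : ℬ, MeasurePreserving (f B) (ν B) (ν B) := by
    intro B
    rcases eq_or_ne B i with hBi | hBi
    · have hcoe : (B : Finset V) = A := by rw [hBi]
      have hfB : f B = fun x => -x := by funext x; simp [hf, hBi]
      rw [hfB, hν]
      refine ⟨measurable_neg, ?_⟩
      refine Measure.ext fun s hs => ?_
      rw [Measure.map_apply measurable_neg hs,
        withDensity_apply _ (hs.preimage measurable_neg), withDensity_apply _ hs, hcoe]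
      conv_rhs => rw [← Measure.map_neg_eq_self (volume : Measure ℝ)]
      rw [setLIntegral_map hs ((hPmeas A).ennreal_ofReal) measurable_neg]
      exact (lintegral_congr fun x => by rw [hPsym]).symm
    · have hfB : f B = id := by funext x; simp [hf, hBi]
      rw [hfB]
      exact MeasurePreserving.id _
  set T : (ℬ → ℝ) → (ℬ → ℝ) := fun J B => f B (J B) with hT
  have hTmp : MeasurePreserving T μ μ := by
    rw [hμν]
    exact measurePreserving_pi ν ν hfmp
  have hTinv : Function.Involutive T := by
    intro J
    funext B
    by_cases h : B = i <;> simp [hT, hf, h]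
  let e : (ℬ → ℝ) ≃ᵐ (ℬ → ℝ) :=
    { toEquiv := hTinv.toPerm, measurable_toFun := hTmp.measurable,
      measurable_invFun := hTmp.measurable }
  have hTemb : MeasurableEmbedding T := e.measurableEmbedding
  -- the integrand difference
  set F : (ℬ → ℝ) → ℝ :=
    fun J => -(J i) * gibbsAvg β ℬ J A - -(J i) * Real.tanh (β * J i) with hF
  have hFi : Integrable F μ := hint1.sub hint2
  have hFTi : Integrable (F ∘ T) μ := (hTmp.integrable_comp_emb hTemb).2 hFi
  have hpt : ∀ J : ℬ → ℝ, 0 ≤ F J + F (T J) := by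
    intro J
    have h0 := pointwise_key ℬ β hβ i (hℬ A hA) J
    have hTJi : T J i = -(J i) := by simp [hT, hf]
    have heq : F J + F (T J)
        = J i * (gibbsAvg β ℬ (T J) A - gibbsAvg β ℬ J A)
          + 2 * J i * Real.tanh (β * J i) := by
      rw [hF]
      simp only [hTJi, mul_neg, Real.tanh_neg]
      ring
    rw [heq]
    exact h0
  have h2 : 0 ≤ ∫ J, (F J + (F ∘ T) J) ∂μ := integral_nonneg (fun J => hpt J)
  rw [integral_add hFi hFTi] at h2
  have h3 : (∫ J, (F ∘ T) J ∂μ) = ∫ J, F J ∂μ := hTmp.integral_comp hTemb F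
  have h4 : 0 ≤ ∫ J, F J ∂μ := by
    rw [h3] at h2
    linarith
  rw [hF, integral_sub hint1 hint2] at h4
  linarith
end

section
/- Fix A ∈ 𝔅, fix all couplings J_B with B ≠ A, and fix β_NL ∈ ℝ. Then for every x ≠ 0 one has the reciprocal relation e^{−2β_NL x} · Γ(β, −x) = − e^{−β_NL x} Γ(β, x) / ( e^{−β_NL x} + Γ(β, x) · sinh(2β x)/x ). -/
open MeasureTheory Real Finset

/-- The partition function `Z(β, x)` with all couplings `J_B`, `B ≠ A`, fixed and
the coupling on `A` equal to `x`. -/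
noncomputable def Zfun {V : Type} [Fintype V] [DecidableEq V] (β : ℝ)
    (ℬ : Finset (Finset V)) (A : Finset V) (J : Finset V → ℝ) (x : ℝ) : ℝ :=
  ∑ σ : V → Bool,
    Real.exp (β * ∑ B ∈ ℬ.erase A, J B * sigmaSet σ B + β * x * sigmaSet σ A)

/-- The Gibbs average `⟨σ_A⟩_x` with all couplings `J_B`, `B ≠ A`, fixed and
the coupling on `A` equal to `x`. -/
noncomputable def gibbsA {V : Type} [Fintype V] [DecidableEq V] (β : ℝ)
    (ℬ : Finset (Finset V)) (A : Finset V) (J : Finset V → ℝ) (x : ℝ) : ℝ :=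
  (∑ σ : V → Bool,
    sigmaSet σ A * Real.exp (β * ∑ B ∈ ℬ.erase A, J B * sigmaSet σ B + β * x * sigmaSet σ A)) /
  Zfun β ℬ A J x

/-- `Γ(β, x) = -x ⟨σ_A⟩_x + x tanh(βx) + (1 - e^{-β_NL x}) x / sinh(2βx)` (for `x ≠ 0`). -/
noncomputable def GammaA {V : Type} [Fintype V] [DecidableEq V] (β : ℝ)
    (ℬ : Finset (Finset V)) (A : Finset V) (J : Finset V → ℝ) (βNL : ℝ) (x : ℝ) : ℝ :=
  -x * gibbsA β ℬ A J x + x * Real.tanh (β * x)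
    + (1 - Real.exp (-(βNL * x))) * x / Real.sinh (2 * β * x)

/-!
Since `σ_A = ±1`, splitting off the `A`-term gives `Z(β, x) = cosh(βx) Z₀ + sinh(βx) W` and
`Z(β, x) ⟨σ_A⟩_x = sinh(βx) Z₀ + cosh(βx) W` for two sums `Z₀`, `W` independent of `x`. With
`sinh(2βx) = 2 sinh(βx) cosh(βx)` this collapses `Γ(β, x)` to `x (r - e^{-β_NL x}) / sinh(2βx)`,
where `r = Z(β, -x) / Z(β, x)`. Replacing `x` by `-x` inverts both `r` and `e^{-β_NL x}`, so the
relation becomes an identity of rational functions in these two quantities.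
-/

lemma exp_mul_eq_cosh_add_mul_sinh (b : ℝ) {t : ℝ} (ht : t = 1 ∨ t = -1) :
    Real.exp (b * t) = Real.cosh b + t * Real.sinh b := by
  rcases ht with rfl | rfl
  · simp [Real.cosh_add_sinh]
  · simp [← Real.cosh_sub_sinh, sub_eq_add_neg]

lemma sum_exp_add_mul_eq_cosh_add_sinh {ι : Type*} (s : Finset ι) (a t : ι → ℝ)
    (ht : ∀ i ∈ s, t i = 1 ∨ t i = -1) (b : ℝ) :
    ∑ i ∈ s, Real.exp (a i + b * t i)
      = Real.cosh b * ∑ i ∈ s, Real.exp (a i) + Real.sinh b * ∑ i ∈ s, t i * Real.exp (a i) := by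
  rw [Finset.mul_sum, Finset.mul_sum, ← Finset.sum_add_distrib]
  refine Finset.sum_congr rfl fun i hi => ?_
  rw [Real.exp_add, exp_mul_eq_cosh_add_mul_sinh b (ht i hi)]
  ring

lemma sum_mul_exp_add_mul_eq_sinh_add_cosh {ι : Type*} (s : Finset ι) (a t : ι → ℝ)
    (ht : ∀ i ∈ s, t i = 1 ∨ t i = -1) (b : ℝ) :
    ∑ i ∈ s, t i * Real.exp (a i + b * t i)
      = Real.sinh b * ∑ i ∈ s, Real.exp (a i) + Real.cosh b * ∑ i ∈ s, t i * Real.exp (a i) := by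
  rw [Finset.mul_sum, Finset.mul_sum, ← Finset.sum_add_distrib]
  refine Finset.sum_congr rfl fun i hi => ?_
  have hsq : t i * t i = 1 := by rcases ht i hi with h | h <;> simp [h]
  rw [Real.exp_add, exp_mul_eq_cosh_add_mul_sinh b (ht i hi)]
  linear_combination Real.sinh b * Real.exp (a i) * hsq

lemma sigmaSet_eq_one_or_neg_one {V : Type} (σ : V → Bool) (B : Finset V) :
    sigmaSet σ B = 1 ∨ sigmaSet σ B = -1 := by
  refine mul_self_eq_one_iff.mp ?_
  rw [sigmaSet, ← Finset.prod_mul_distrib]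
  exact Finset.prod_eq_one fun i _ => by cases σ i <;> simp [spinVal]

section Ising

variable {V : Type} [Fintype V] [DecidableEq V] (β : ℝ) (ℬ : Finset (Finset V)) (A : Finset V)
  (J : Finset V → ℝ)

lemma Zfun_pos (x : ℝ) : 0 < Zfun β ℬ A J x :=
  Finset.sum_pos (fun _ _ => Real.exp_pos _) Finset.univ_nonempty

lemma sinh_mul_tanh_sub_gibbsA (x : ℝ) :
    Real.sinh (2 * β * x) * (Real.tanh (β * x) - gibbsA β ℬ A J x)
      = Zfun β ℬ A J (-x) / Zfun β ℬ A J x - 1 := by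
  obtain ⟨Z₀, W, hZ, hM⟩ : ∃ Z₀ W : ℝ,
      (∀ y, Zfun β ℬ A J y = Real.cosh (β * y) * Z₀ + Real.sinh (β * y) * W) ∧
      gibbsA β ℬ A J x
        = (Real.sinh (β * x) * Z₀ + Real.cosh (β * x) * W) / Zfun β ℬ A J x := by
    have hsign : ∀ σ ∈ (Finset.univ : Finset (V → Bool)), sigmaSet σ A = 1 ∨ sigmaSet σ A = -1 :=
      fun σ _ => sigmaSet_eq_one_or_neg_one σ A
    refine ⟨_, _, fun y => sum_exp_add_mul_eq_cosh_add_sinh _ _ _ hsign (β * y), ?_⟩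
    exact congrArg (· / _) (sum_mul_exp_add_mul_eq_sinh_add_cosh _ _ _ hsign (β * x))
  have hZx := Zfun_pos β ℬ A J x
  rw [hZ] at hZx
  rw [hM, hZ, hZ, mul_neg, Real.cosh_neg, Real.sinh_neg, Real.tanh_eq_sinh_div_cosh, mul_assoc,
    Real.sinh_two_mul]
  have hc := (Real.cosh_pos (β * x)).ne'
  field_simp
  linear_combination (-2 * Real.sinh (β * x) * W) * Real.cosh_sq_sub_sinh_sq (β * x)

lemma GammaA_eq_mul_Zfun_ratio_sub (βNL : ℝ) {x : ℝ} (hS : Real.sinh (2 * β * x) ≠ 0) :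
    GammaA β ℬ A J βNL x
      = x * (Zfun β ℬ A J (-x) / Zfun β ℬ A J x - Real.exp (-(βNL * x)))
        / Real.sinh (2 * β * x) := by
  rw [← sub_add_cancel (Zfun β ℬ A J (-x) / Zfun β ℬ A J x) 1, ← sinh_mul_tanh_sub_gibbsA,
    GammaA, eq_div_iff hS, add_mul, div_mul_cancel₀ _ hS]
  ring

end Ising

theorem Gamma_reciprocal_relation_general
    {V : Type} [Fintype V] [DecidableEq V]
    (ℬ : Finset (Finset V))
    (A : Finset V)
    (J : Finset V → ℝ) (β : ℝ) (hβ : 0 < β) (βNL : ℝ)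
    (x : ℝ) (hx : x ≠ 0) :
    Real.exp (-(2 * βNL * x)) * GammaA β ℬ A J βNL (-x)
      = -(Real.exp (-(βNL * x)) * GammaA β ℬ A J βNL x)
        / (Real.exp (-(βNL * x)) + GammaA β ℬ A J βNL x * (Real.sinh (2 * β * x) / x)) := by
  have hS : Real.sinh (2 * β * x) ≠ 0 := by simp [Real.sinh_eq_zero, hβ.ne', hx]
  have hS' : Real.sinh (2 * β * -x) ≠ 0 := by simp [Real.sinh_eq_zero, hβ.ne', hx]
  have hZ := (Zfun_pos β ℬ A J x).ne'
  have hZ' := (Zfun_pos β ℬ A J (-x)).ne'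
  have hexp : Real.exp (-(βNL * -x)) = (Real.exp (-(βNL * x)))⁻¹ := by
    rw [← Real.exp_neg, mul_neg, neg_neg]
  have hexp2 : Real.exp (-(2 * βNL * x)) = Real.exp (-(βNL * x)) ^ 2 := by
    rw [← Real.exp_nat_mul]; ring_nf
  have hdenom : Real.exp (-(βNL * x)) + GammaA β ℬ A J βNL x * (Real.sinh (2 * β * x) / x)
      = Zfun β ℬ A J (-x) / Zfun β ℬ A J x := by
    rw [GammaA_eq_mul_Zfun_ratio_sub β ℬ A J βNL hS]
    field_simp
    ring
  rw [hdenom, GammaA_eq_mul_Zfun_ratio_sub β ℬ A J βNL hS,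
    GammaA_eq_mul_Zfun_ratio_sub β ℬ A J βNL hS', neg_neg, hexp, hexp2, mul_neg, Real.sinh_neg]
  field_simp
  ring

/-- For fixed couplings `J_B` (`B ≠ A`), `β_NL ∈ ℝ` and every `x ≠ 0`, the reciprocal relation
`e^{-2β_NL x} Γ(β, -x) = -e^{-β_NL x} Γ(β, x) / (e^{-β_NL x} + Γ(β, x) sinh(2βx)/x)` holds. -/
theorem Gamma_reciprocal_relation
    {V : Type} [Fintype V] [DecidableEq V]
    (ℬ : Finset (Finset V)) (hℬ : ∀ B ∈ ℬ, B.Nonempty)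
    (A : Finset V) (hA : A ∈ ℬ)
    (J : Finset V → ℝ) (β : ℝ) (hβ : 0 < β) (βNL : ℝ)
    (x : ℝ) (hx : x ≠ 0) :
    Real.exp (-(2 * βNL * x)) * GammaA β ℬ A J βNL (-x)
      = -(Real.exp (-(βNL * x)) * GammaA β ℬ A J βNL x)
        / (Real.exp (-(βNL * x)) + GammaA β ℬ A J βNL x * (Real.sinh (2 * β * x) / x)) :=
  Gamma_reciprocal_relation_general ℬ A J β hβ βNL x hx
end

section
/- Fix β_NL ∈ ℝ and a probability density P_A on ℝ satisfying P_A(−x) = exp(−2 β_NL x) P_A(x) for all x ∈ ℝ. Then for every measurable even function f : ℝ → ℝ with f ≥ 0 (assuming the integrals below are finite), one has ∫_ℝ [ −x f(x) tanh(β x) − x f(x)(1 − e^{−β_NL x}) / sinh(2β x) ] P_A(x) dx = ∫_ℝ (−x f(x) tanh(β x)) P_A(x) dx − ∫_0^∞ P_A(x) · x f(x) · e^{−2β_NL x} (1 − e^{β_NL x})² / sinh(2β x) dx, and consequently ∫_ℝ [ −x f(x) tanh(β x) − x f(x)(1 − e^{−β_NL x}) / sinh(2β x) ] P_A(x) dx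 ≤ ∫_ℝ (−x f(x) tanh(β x)) P_A(x) dx. -/
open MeasureTheory Real

/-!
Write the left-hand integrand as the `tanh` term minus `k(x) P(x)`, where
`k(x) = x f(x) (1 - e^{-β_NL x}) / sinh(2βx)`. Folding the integral of `k P` onto the positive
half-line, the asymmetry `P(-x) = e^{-2β_NL x} P(x)` and the parity of `f` give
`k(x) P(x) + k(-x) P(-x) = x f(x) P(x) e^{-2β_NL x} (1 - e^{β_NL x})² / sinh(2βx)`,
which is nonnegative for `x > 0` and `β > 0`.
-/

theorem integral_eq_integral_Ioi_add_comp_neg {E : Type*} [NormedAddCommGroup E]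
    [NormedSpace ℝ E] {h : ℝ → E} (hh : Integrable h) :
    ∫ x, h x = ∫ x in Set.Ioi 0, (h x + h (-x)) := by
  rw [integral_add hh.integrableOn hh.comp_neg.integrableOn, integral_comp_neg_Ioi, neg_zero,
    add_comm, intervalIntegral.integral_Iic_add_Ioi hh.integrableOn hh.integrableOn]

lemma one_sub_exp_neg_add_exp_neg_two_mul_mul_one_sub_exp (a : ℝ) :
    1 - exp (-a) + exp (-2 * a) * (1 - exp a) = exp (-2 * a) * (1 - exp a) ^ 2 := by
  have hinv : exp (-a) * exp a = 1 := by rw [← exp_add, neg_add_cancel, exp_zero]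
  have hsq : exp (-2 * a) = exp (-a) ^ 2 := by rw [← exp_nat_mul]; ring_nf
  rw [hsq]
  linear_combination (exp (-a) - exp (-a) * exp a - 1) * hinv

lemma mul_div_sinh_add_comp_neg {β b x : ℝ} {f P : ℝ → ℝ} (hf : f (-x) = f x)
    (hP : P (-x) = exp (-2 * b * x) * P x) :
    x * f x * (1 - exp (-(b * x))) / sinh (2 * β * x) * P x
        + -x * f (-x) * (1 - exp (-(b * -x))) / sinh (2 * β * -x) * P (-x)
      = P x * (x * f x) * (exp (-2 * b * x) * (1 - exp (b * x)) ^ 2 / sinh (2 * β * x)) := by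
  rw [hf, hP, mul_assoc (-2), ← one_sub_exp_neg_add_exp_neg_two_mul_mul_one_sub_exp]
  simp only [mul_neg, neg_neg, sinh_neg, neg_mul, neg_div_neg_eq]
  ring

lemma mul_exp_mul_one_sub_exp_sq_div_sinh_nonneg {β b x p y : ℝ} (hβ : 0 < β) (hx : 0 < x)
    (hp : 0 ≤ p) (hy : 0 ≤ y) :
    0 ≤ p * (x * y) * (exp (-2 * b * x) * (1 - exp (b * x)) ^ 2 / sinh (2 * β * x)) := by
  have : 0 < sinh (2 * β * x) := sinh_pos_iff.2 (by positivity)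
  positivity

theorem asymmetric_bound_correction_term_general
    (β : ℝ) (hβ : 0 < β) (βNL : ℝ)
    (P : ℝ → ℝ) (hPnonneg : ∀ x, 0 ≤ P x)
    (hPasym : ∀ x : ℝ, P (-x) = Real.exp (-2 * βNL * x) * P x)
    (f : ℝ → ℝ) (hfeven : ∀ x, f (-x) = f x)
    (hfnonneg : ∀ x, 0 ≤ f x)
    -- the left-hand-side integrand, extended continuously to `x = 0`
    (g : ℝ → ℝ)
    (hg : ∀ x : ℝ, x ≠ 0 → g x = -x * f x * Real.tanh (β * x)
        - x * f x * (1 - Real.exp (-(βNL * x))) / Real.sinh (2 * β * x))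
    -- finiteness of the integrals
    (hint1 : Integrable (fun x => g x * P x))
    (hint2 : Integrable (fun x => -x * f x * Real.tanh (β * x) * P x)) :
    (∫ x, g x * P x)
        = (∫ x, -x * f x * Real.tanh (β * x) * P x)
          - ∫ x in Set.Ioi (0 : ℝ),
              P x * (x * f x) * (Real.exp (-2 * βNL * x) * (1 - Real.exp (βNL * x)) ^ 2
                / Real.sinh (2 * β * x))
      ∧ (∫ x, g x * P x) ≤ ∫ x, -x * f x * Real.tanh (β * x) * P x := by
  have hdiff : ∀ x ≠ 0, g x * P x - -x * f x * tanh (β * x) * P x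
      = -(x * f x * (1 - exp (-(βNL * x))) / sinh (2 * β * x) * P x) := by
    intro x hx
    rw [hg x hx]
    ring
  have hfold : ∫ x, (g x * P x - -x * f x * tanh (β * x) * P x)
      = -∫ x in Set.Ioi 0, P x * (x * f x)
          * (exp (-2 * βNL * x) * (1 - exp (βNL * x)) ^ 2 / sinh (2 * β * x)) := by
    rw [integral_eq_integral_Ioi_add_comp_neg
      (hint1.sub hint2 : Integrable fun x => g x * P x - -x * f x * tanh (β * x) * P x),
      ← integral_neg]
    refine setIntegral_congr_fun measurableSet_Ioi fun x (hx : 0 < x) => ?_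
    rw [hdiff x hx.ne', hdiff (-x) (neg_ne_zero.2 hx.ne'),
      ← mul_div_sinh_add_comp_neg (hfeven x) (hPasym x)]
    ring
  rw [integral_sub hint1 hint2] at hfold
  have hcorr := setIntegral_nonneg (μ := volume) measurableSet_Ioi fun x (hx : 0 < x) =>
    mul_exp_mul_one_sub_exp_sq_div_sinh_nonneg (b := βNL) hβ hx (hPnonneg x) (hfnonneg x)
  constructor <;> linarith

/-- Rewriting the right-hand side of the asymmetric lower bound: if
`P_A(-x) = exp(-2 β_NL x) P_A(x)`, then for every nonnegative measurable even `f`,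
`∫ [-x f(x) tanh(βx) - x f(x)(1 - e^{-β_NL x})/sinh(2βx)] P_A(x) dx
  = ∫ -x f(x) tanh(βx) P_A(x) dx
    - ∫_{0}^{∞} P_A(x) x f(x) e^{-2β_NL x} (1 - e^{β_NL x})² / sinh(2βx) dx`,
and consequently the left-hand side is at most `∫ -x f(x) tanh(βx) P_A(x) dx`.
(The first integrand is extended continuously, by the value `0`, at `x = 0`.) -/
theorem asymmetric_bound_correction_term
    (β : ℝ) (hβ : 0 < β) (βNL : ℝ)
    (P : ℝ → ℝ) (hPmeas : Measurable P) (hPnonneg : ∀ x, 0 ≤ P x)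
    (hPone : ∫ x, P x = 1)
    (hPasym : ∀ x : ℝ, P (-x) = Real.exp (-2 * βNL * x) * P x)
    (f : ℝ → ℝ) (hfmeas : Measurable f) (hfeven : ∀ x, f (-x) = f x)
    (hfnonneg : ∀ x, 0 ≤ f x)
    -- the left-hand-side integrand, extended continuously to `x = 0`
    (g : ℝ → ℝ) (hg0 : g 0 = 0)
    (hg : ∀ x : ℝ, x ≠ 0 → g x = -x * f x * Real.tanh (β * x)
        - x * f x * (1 - Real.exp (-(βNL * x))) / Real.sinh (2 * β * x))
    -- finiteness of the integrals
    (hint1 : Integrable (fun x => g x * P x))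
    (hint2 : Integrable (fun x => -x * f x * Real.tanh (β * x) * P x))
    (hint3 : IntegrableOn
      (fun x => P x * (x * f x) * (Real.exp (-2 * βNL * x) * (1 - Real.exp (βNL * x)) ^ 2
        / Real.sinh (2 * β * x))) (Set.Ioi (0 : ℝ))) :
    (∫ x, g x * P x)
        = (∫ x, -x * f x * Real.tanh (β * x) * P x)
          - ∫ x in Set.Ioi (0 : ℝ),
              P x * (x * f x) * (Real.exp (-2 * βNL * x) * (1 - Real.exp (βNL * x)) ^ 2
                / Real.sinh (2 * β * x))
      ∧ (∫ x, g x * P x) ≤ ∫ x, -x * f x * Real.tanh (β * x) * P x :=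
  asymmetric_bound_correction_term_general β hβ βNL P hPnonneg hPasym f hfeven hfnonneg g hg hint1
    hint2
end

section
/- Fix A ∈ 𝔅 and a constant J_{0,A} ∈ ℝ, and assume the density of the coupling J_A is symmetric about J_{0,A}: P_A(J_{0,A} − x) = P_A(J_{0,A} + x) for all x ∈ ℝ. Then for every measurable even function f : ℝ → ℝ with f ≥ 0 (assuming all quenched averages below are finite), E[ (J_{0,A} − J_A) f(J_A − J_{0,A}) ⟨σ_A⟩_J ] ≥ E[ (J_{0,A} − J_A) f(J_A − J_{0,A}) tanh(β(J_A − J_{0,A})) ]. -/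
open MeasureTheory Real Finset ProbabilityTheory
open scoped ENNReal

/-!
Freezing every coupling but `J_A`, the Gibbs average is `tanh (β J_A + h)` for an effective field
`h` independent of `J_A`. Reflecting `J_A` about `J_{0,A}` preserves the quenched measure, so each
side may be replaced by the average of its integrand and its reflection. With
`x = β (J_A - J_{0,A})` and `d = β J_{0,A} + h` the pointwise comparison becomes
`x (tanh (x + d) + tanh (x - d)) ≤ 2 x tanh x`, which holds since
`tanh (x + d) + tanh (x - d) = sinh 2x / (cosh² x + sinh² d)` and `x sinh 2x ≥ 0`.
-/

lemma mul_tanh_add_add_tanh_sub_le (x d : ℝ) :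
    x * (tanh (x + d) + tanh (x - d)) ≤ 2 * x * tanh x := by
  have hx : 0 ≤ x * sinh x := by
    rcases le_total 0 x with h | h
    · exact mul_nonneg h (sinh_nonneg_iff.mpr h)
    · exact mul_nonneg_of_nonpos_of_nonpos h (sinh_nonpos_iff.mpr h)
  have hcx := cosh_pos x
  have hsum : tanh (x + d) + tanh (x - d)
      = 2 * sinh x * cosh x / (cosh x ^ 2 + sinh d ^ 2) := by
    have h1 := cosh_pos (x + d)
    have h2 := cosh_pos (x - d)
    rw [tanh_eq_sinh_div_cosh, tanh_eq_sinh_div_cosh, div_add_div _ _ h1.ne' h2.ne',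
      div_eq_div_iff (by positivity) (by positivity)]
    simp only [sinh_add, cosh_add, sinh_sub, cosh_sub]
    linear_combination 2 * sinh x * cosh x * sinh d ^ 2 * (cosh_sq d - cosh_sq x)
  have hnum : 0 ≤ x * (2 * sinh x * cosh x) := by nlinarith
  calc x * (tanh (x + d) + tanh (x - d))
      = x * (2 * sinh x * cosh x) / (cosh x ^ 2 + sinh d ^ 2) := by rw [hsum]; ring
    _ ≤ x * (2 * sinh x * cosh x) / cosh x ^ 2 :=
      div_le_div_of_nonneg_left hnum (by positivity) (by nlinarith [sq_nonneg (sinh d)])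
    _ = 2 * x * tanh x := by rw [tanh_eq_sinh_div_cosh]; field_simp

lemma sub_div_add_eq_tanh {a b : ℝ} (ha : 0 < a) (hb : 0 < b) (t : ℝ) :
    (a * exp t - b * exp (-t)) / (a * exp t + b * exp (-t)) = tanh (t + log (a / b) / 2) := by
  rw [tanh_eq_sinh_div_cosh, sinh_eq, cosh_eq, neg_add, exp_add, exp_add, exp_neg (log _ / 2)]
  set k := exp (log (a / b) / 2)
  have hk : b * (k * k) = a := by
    rw [← exp_add, add_halves, exp_log (div_pos ha hb), mul_div_cancel₀ _ hb.ne']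
  have hk0 : 0 < k := exp_pos _
  rw [div_eq_div_iff (by positivity) (by positivity)]
  field_simp
  linear_combination -2 * exp t * exp (-t) * hk

lemma exists_sum_mul_exp_div_sum_exp_eq_tanh {Ω : Type*} [Fintype Ω] {s : Ω → ℝ}
    (hs : ∀ ω, s ω = 1 ∨ s ω = -1) (hpos : ∃ ω, s ω = 1) (hneg : ∃ ω, s ω = -1) (r : Ω → ℝ) :
    ∃ h, ∀ t, (∑ ω, s ω * exp (t * s ω + r ω)) / (∑ ω, exp (t * s ω + r ω)) = tanh (t + h) := by
  set a := ∑ ω, (1 + s ω) / 2 * exp (r ω)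
  set b := ∑ ω, (1 - s ω) / 2 * exp (r ω)
  have hterm : ∀ ω, 0 ≤ (1 + s ω) / 2 * exp (r ω) ∧ 0 ≤ (1 - s ω) / 2 * exp (r ω) := by
    intro ω
    rcases hs ω with h | h <;> rw [h] <;> constructor <;> norm_num <;> positivity
  have ha : 0 < a := by
    obtain ⟨ω₀, h₀⟩ := hpos
    exact sum_pos' (fun ω _ => (hterm ω).1) ⟨ω₀, mem_univ _, by rw [h₀]; positivity⟩
  have hb : 0 < b := by
    obtain ⟨ω₀, h₀⟩ := hneg
    exact sum_pos' (fun ω _ => (hterm ω).2) ⟨ω₀, mem_univ _, by rw [h₀]; positivity⟩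
  refine ⟨log (a / b) / 2, fun t => ?_⟩
  have hsplit : ∀ ω, exp (t * s ω + r ω)
        = (1 + s ω) / 2 * exp (r ω) * exp t + (1 - s ω) / 2 * exp (r ω) * exp (-t) ∧
      s ω * exp (t * s ω + r ω)
        = (1 + s ω) / 2 * exp (r ω) * exp t - (1 - s ω) / 2 * exp (r ω) * exp (-t) := by
    intro ω
    rcases hs ω with h | h <;> rw [h] <;> constructor <;>
      simp only [mul_one, mul_neg_one, exp_add] <;> ring
  rw [← sub_div_add_eq_tanh ha hb, sum_congr rfl fun ω _ => (hsplit ω).2,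
    sum_congr rfl fun ω _ => (hsplit ω).1, sum_sub_distrib, sum_add_distrib, ← sum_mul,
    ← sum_mul]

lemma reflect_weighted_tanh_le {f : ℝ → ℝ} (hfeven : ∀ x, f (-x) = f x) (hf0 : ∀ x, 0 ≤ f x)
    {β : ℝ} (hβ : 0 < β) (c u h : ℝ) :
    (c - u) * f (u - c) * tanh (β * (u - c))
        + (c - (2 * c - u)) * f (2 * c - u - c) * tanh (β * (2 * c - u - c))
      ≤ (c - u) * f (u - c) * tanh (β * u + h)
        + (c - (2 * c - u)) * f (2 * c - u - c) * tanh (β * (2 * c - u) + h) := by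
  have key := mul_tanh_add_add_tanh_sub_le (β * (u - c)) (β * c + h)
  rw [show β * (u - c) + (β * c + h) = β * u + h by ring,
    show β * (u - c) - (β * c + h) = -(β * (2 * c - u) + h) by ring, tanh_neg] at key
  rw [show 2 * c - u - c = -(u - c) by ring, hfeven, mul_neg, tanh_neg]
  have hD : (u - c) * (tanh (β * u + h) - tanh (β * (2 * c - u) + h)
      - 2 * tanh (β * (u - c))) ≤ 0 :=
    nonpos_of_mul_nonpos_right (by linarith) hβ
  nlinarith [mul_nonpos_of_nonneg_of_nonpos (hf0 (u - c)) hD]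

section Gibbs

variable {V : Type}

lemma sigmaSet_eq_one_or_eq_neg_one (σ : V → Bool) (B : Finset V) :
    sigmaSet σ B = 1 ∨ sigmaSet σ B = -1 := by
  rw [← mul_self_eq_one_iff, sigmaSet, ← prod_mul_distrib]
  exact prod_eq_one fun i _ => by cases σ i <;> simp [spinVal]

lemma sigmaSet_const_true (B : Finset V) : sigmaSet (fun _ => true) B = 1 :=
  prod_eq_one fun _ _ => by simp [spinVal]

lemma sigmaSet_flip_single [DecidableEq V] {B : Finset V} {i : V} (hi : i ∈ B) :
    sigmaSet (fun j => decide (j ≠ i)) B = -1 := by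
  rw [sigmaSet, prod_eq_single_of_mem i hi fun j _ hj => by simp [spinVal, hj]]
  simp [spinVal]

lemma exists_gibbsAvg_update_eq_tanh [Fintype V] [DecidableEq V] (β : ℝ)
    (ℬ : Finset (Finset V)) {A : Finset V} (hA : A ∈ ℬ) (hAne : A.Nonempty) (J : ℬ → ℝ) :
    ∃ h, ∀ w, gibbsAvg β ℬ (Function.update J ⟨A, hA⟩ w) A = tanh (β * w + h) := by
  set A₀ : ℬ := ⟨A, hA⟩
  set R : (V → Bool) → ℝ := fun σ => β * ∑ B ∈ univ.erase A₀, J B * sigmaSet σ B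
  obtain ⟨i, hi⟩ := hAne
  obtain ⟨h, hh⟩ := exists_sum_mul_exp_div_sum_exp_eq_tanh
    (fun σ => sigmaSet_eq_one_or_eq_neg_one σ A) ⟨_, sigmaSet_const_true A⟩
    ⟨_, sigmaSet_flip_single hi⟩ R
  refine ⟨h, fun w => ?_⟩
  have henergy : ∀ σ, β * ∑ B : ℬ, Function.update J A₀ w B * sigmaSet σ B
      = β * w * sigmaSet σ A + R σ := by
    intro σ
    rw [← add_sum_erase _ _ (mem_univ A₀), Function.update_self, mul_add, mul_assoc]
    congr 2
    exact sum_congr rfl fun B hB => by rw [Function.update_of_ne (ne_of_mem_erase hB)]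
  rw [← hh, gibbsAvg]
  simp only [henergy]

end Gibbs

section Reflection

open Function

lemma MeasureTheory.MeasurePreserving.withDensity_of_comp_eq {α : Type*} [MeasurableSpace α]
    {μ : Measure α} {T : α → α} (hT : MeasurePreserving T μ μ) (hTe : MeasurableEmbedding T)
    {g : α → ℝ≥0∞} (hg : ∀ x, g (T x) = g x) :
    MeasurePreserving T (μ.withDensity g) (μ.withDensity g) := by
  refine ⟨hT.measurable, Measure.ext fun s hs => ?_⟩
  rw [Measure.map_apply hT.measurable hs, withDensity_apply _ (hT.measurable hs),
    withDensity_apply _ hs, ← hT.setLIntegral_comp_preimage_emb hTe g s]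
  simp only [hg]

lemma integral_le_integral_of_add_comp_le {α : Type*} [MeasurableSpace α] {μ : Measure α}
    {T : α → α} (hT : MeasurePreserving T μ μ) (hinv : Involutive T) {f g : α → ℝ}
    (hf : Integrable f μ) (hg : Integrable g μ) (h : ∀ x, f x + f (T x) ≤ g x + g (T x)) :
    ∫ x, f x ∂μ ≤ ∫ x, g x ∂μ := by
  have hTe := (MeasurableEquiv.ofInvolutive T hinv hT.measurable).measurableEmbedding
  have hfT : Integrable (fun x => f (T x)) μ := (hT.integrable_comp_emb hTe).mpr hf
  have hgT : Integrable (fun x => g (T x)) μ := (hT.integrable_comp_emb hTe).mpr hg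
  calc ∫ x, f x ∂μ = (∫ x, (f x + f (T x)) ∂μ) / 2 := by
        rw [integral_add hf hfT, hT.integral_comp hTe]; ring
    _ ≤ (∫ x, (g x + g (T x)) ∂μ) / 2 := by
        gcongr ?_ / 2; exact integral_mono (hf.add hfT) (hg.add hgT) h
    _ = ∫ x, g x ∂μ := by rw [integral_add hg hgT, hT.integral_comp hTe]; ring

variable {ι : Type*} [DecidableEq ι]

def reflectAt (i : ι) (c : ℝ) (J : ι → ℝ) : ι → ℝ := update J i (2 * c - J i)

@[simp]
lemma reflectAt_self (i : ι) (c : ℝ) (J : ι → ℝ) : reflectAt i c J i = 2 * c - J i :=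
  update_self ..

lemma reflectAt_involutive (i : ι) (c : ℝ) : Involutive (reflectAt i c) := fun J => by
  simp [reflectAt]

lemma measurePreserving_reflectAt_pi [Fintype ι] (ν : ι → Measure ℝ) [∀ j, SigmaFinite (ν j)]
    (i : ι) (c : ℝ) (hν : MeasurePreserving (fun x => 2 * c - x) (ν i) (ν i)) :
    MeasurePreserving (reflectAt i c) (Measure.pi ν) (Measure.pi ν) := by
  have hpi : reflectAt i c = fun J j => update (fun _ => id) i (fun x => 2 * c - x) j (J j) := by
    funext J j
    by_cases hj : j = i
    · subst hj; simp [reflectAt]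
    · simp [reflectAt, hj]
  rw [hpi]
  refine measurePreserving_pi ν ν fun j => ?_
  by_cases hj : j = i
  · subst hj; simpa using hν
  · simpa [hj] using MeasurePreserving.id (ν j)

lemma measurePreserving_reflectAt_quenchedMeasure {V : Type} [DecidableEq V]
    (ℬ : Finset (Finset V)) (P : Finset V → ℝ → ℝ) {A : Finset V} (hA : A ∈ ℬ) {c : ℝ}
    (hPsym : ∀ x, P A (c - x) = P A (c + x)) :
    MeasurePreserving (reflectAt ⟨A, hA⟩ c) (quenchedMeasure ℬ P) (quenchedMeasure ℬ P) :=
  measurePreserving_reflectAt_pi _ _ c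
    ((Measure.measurePreserving_sub_left volume (2 * c)).withDensity_of_comp_eq
      (Homeomorph.subLeft (2 * c)).measurableEmbedding fun x => by
        rw [show 2 * c - x = c - (x - c) by ring, hPsym, add_sub_cancel])

end Reflection

theorem local_energy_lower_bound_shifted_symmetric_general
    {V : Type} [Fintype V] [DecidableEq V]
    (ℬ : Finset (Finset V)) (hℬ : ∀ B ∈ ℬ, B.Nonempty)
    (β : ℝ) (hβ : 0 < β)
    (P : Finset V → ℝ → ℝ)
    (A : Finset V) (hA : A ∈ ℬ)
    (J0A : ℝ)
    (hPsym : ∀ x : ℝ, P A (J0A - x) = P A (J0A + x))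
    (f : ℝ → ℝ) (hfeven : ∀ x, f (-x) = f x)
    (hfnonneg : ∀ x, 0 ≤ f x)
    -- finiteness of the quenched averages
    (hint1 : Integrable
      (fun J : ℬ → ℝ => (J0A - J ⟨A, hA⟩) * f (J ⟨A, hA⟩ - J0A) * gibbsAvg β ℬ J A)
      (quenchedMeasure ℬ P))
    (hint2 : Integrable
      (fun J : ℬ → ℝ =>
        (J0A - J ⟨A, hA⟩) * f (J ⟨A, hA⟩ - J0A) * Real.tanh (β * (J ⟨A, hA⟩ - J0A)))
      (quenchedMeasure ℬ P)) :
    ∫ J, (J0A - J ⟨A, hA⟩) * f (J ⟨A, hA⟩ - J0A) * gibbsAvg β ℬ J A ∂(quenchedMeasure ℬ P)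
      ≥ ∫ J, (J0A - J ⟨A, hA⟩) * f (J ⟨A, hA⟩ - J0A)
          * Real.tanh (β * (J ⟨A, hA⟩ - J0A)) ∂(quenchedMeasure ℬ P) := by
  refine integral_le_integral_of_add_comp_le
    (measurePreserving_reflectAt_quenchedMeasure ℬ P hA hPsym) (reflectAt_involutive _ _)
    hint2 hint1 fun J => ?_
  obtain ⟨h, hh⟩ := exists_gibbsAvg_update_eq_tanh β ℬ hA (hℬ A hA) J
  have hJ : gibbsAvg β ℬ J A = tanh (β * J ⟨A, hA⟩ + h) := by
    simpa using hh (J ⟨A, hA⟩)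
  have hJ_reflect : gibbsAvg β ℬ (reflectAt ⟨A, hA⟩ J0A J) A
      = tanh (β * (2 * J0A - J ⟨A, hA⟩) + h) :=
    hh _
  simp only [reflectAt_self, hJ, hJ_reflect]
  exact reflect_weighted_tanh_le hfeven hfnonneg hβ J0A (J ⟨A, hA⟩) h

/-- **Corollary (distribution symmetric about `J_{0,A}`).** If
`P_A(J_{0,A} - x) = P_A(J_{0,A} + x)`, then for every nonnegative measurable even `f`,
`E[(J_{0,A} - J_A) f(J_A - J_{0,A}) ⟨σ_A⟩_J]
  ≥ E[(J_{0,A} - J_A) f(J_A - J_{0,A}) tanh(β(J_A - J_{0,A}))]`. -/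
theorem local_energy_lower_bound_shifted_symmetric
    {V : Type} [Fintype V] [DecidableEq V]
    (ℬ : Finset (Finset V)) (hℬ : ∀ B ∈ ℬ, B.Nonempty)
    (β : ℝ) (hβ : 0 < β)
    (P : Finset V → ℝ → ℝ)
    (hPmeas : ∀ B, Measurable (P B))
    (hPnonneg : ∀ B x, 0 ≤ P B x)
    (hPone : ∀ B, ∫ x, P B x = 1)
    (A : Finset V) (hA : A ∈ ℬ)
    (J0A : ℝ)
    (hPsym : ∀ x : ℝ, P A (J0A - x) = P A (J0A + x))
    (f : ℝ → ℝ) (hfmeas : Measurable f) (hfeven : ∀ x, f (-x) = f x)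
    (hfnonneg : ∀ x, 0 ≤ f x)
    -- finiteness of the quenched averages
    (hint1 : Integrable
      (fun J : ℬ → ℝ => (J0A - J ⟨A, hA⟩) * f (J ⟨A, hA⟩ - J0A) * gibbsAvg β ℬ J A)
      (quenchedMeasure ℬ P))
    (hint2 : Integrable
      (fun J : ℬ → ℝ =>
        (J0A - J ⟨A, hA⟩) * f (J ⟨A, hA⟩ - J0A) * Real.tanh (β * (J ⟨A, hA⟩ - J0A)))
      (quenchedMeasure ℬ P)) :
    ∫ J, (J0A - J ⟨A, hA⟩) * f (J ⟨A, hA⟩ - J0A) * gibbsAvg β ℬ J A ∂(quenchedMeasure ℬ P)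
      ≥ ∫ J, (J0A - J ⟨A, hA⟩) * f (J ⟨A, hA⟩ - J0A)
          * Real.tanh (β * (J ⟨A, hA⟩ - J0A)) ∂(quenchedMeasure ℬ P) :=
  local_energy_lower_bound_shifted_symmetric_general ℬ hℬ β hβ P A hA J0A hPsym f hfeven hfnonneg
    hint1 hint2
end

section
/- Consider the random-field Ising model: in addition to arbitrary interactions J_B (B ∈ 𝔅, each B with |B| ≥ 2, deterministic or random with any densities), each site i ∈ V carries an independent Gaussian random field h_i ~ N(J_0, Λ²) with Λ > 0, so the Hamiltonian is H(σ) = −∑_{B∈𝔅} J_B σ_B − ∑_{i∈V} h_i σ_i. Then for every site i ∈ V, the quenched average of the square of the local magnetization satisfies E[ tanh²(β h) ]_{N(0, Λ²)} ≤ E[ ⟨σ_i⟩² ], where the left-hand side is the expectation of tanh²(β x) under a centered Gaussian with variance Λ² and is independent of J_0 and of all the interactions J_B. -/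
open MeasureTheory Real Finset ProbabilityTheory
open scoped NNReal ENNReal

/-- The Gibbs average `⟨σ_i⟩` of the spin at site `i`, for the random-field Ising model
with Hamiltonian `H(σ) = -∑_{B ∈ ℬ} J_B σ_B - ∑_{j ∈ V} h_j σ_j`. -/
noncomputable def rfGibbs {V : Type} [Fintype V] [DecidableEq V] (β : ℝ)
    (ℬ : Finset (Finset V)) (J : ℬ → ℝ) (h : V → ℝ) (i : V) : ℝ :=
  (∑ σ : V → Bool, spinVal (σ i) *
      Real.exp (β * ((∑ B : ℬ, J B * sigmaSet σ (B : Finset V)) + ∑ j, h j * spinVal (σ j)))) /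
  (∑ σ : V → Bool,
      Real.exp (β * ((∑ B : ℬ, J B * sigmaSet σ (B : Finset V)) + ∑ j, h j * spinVal (σ j))))

/-!
Fix the couplings and every field except `h_i`. Summing over the other spins gives
`⟨σ_i⟩ = tanh (β h_i + c)`, where the cavity field `c` does not depend on `h_i`. After an affine
change of variables it therefore suffices that shifting a centred Gaussian can only increase the
mean of `tanh²`. This is Anderson's inequality on the line: if `T` is even and nondecreasing in
`|x|` and `φ` is even and nonincreasing in `|x|`, pairing `x` with its mirror image `m - x` gives
`2 ∫ T x (φ (x - m) - φ x) = ∫ (T x - T (m - x)) (φ (x - m) - φ x) ≥ 0`.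
-/

namespace Real

theorem tanh_le_tanh {a b : ℝ} (h : a ≤ b) : tanh a ≤ tanh b := by
  rwa [← artanh_le_artanh_iff ⟨neg_one_lt_tanh a, tanh_lt_one a⟩ ⟨neg_one_lt_tanh b, tanh_lt_one b⟩,
    artanh_tanh, artanh_tanh]

theorem abs_tanh (x : ℝ) : |tanh x| = tanh |x| := by
  rcases le_total 0 x with hx | hx
  · rw [abs_of_nonneg hx, abs_of_nonneg (tanh_zero ▸ tanh_le_tanh hx)]
  · rw [abs_of_nonpos hx, abs_of_nonpos (tanh_zero ▸ tanh_le_tanh hx), tanh_neg]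

theorem tanh_sq_le_tanh_sq_of_abs_le {a b : ℝ} (h : |a| ≤ |b|) : tanh a ^ 2 ≤ tanh b ^ 2 := by
  rw [sq_le_sq, abs_tanh, abs_tanh]
  exact tanh_le_tanh h

theorem abs_tanh_sq_le_one (x : ℝ) : |tanh x ^ 2| ≤ 1 := by
  rw [abs_of_nonneg (sq_nonneg _), sq_le_one_iff_abs_le_one]
  exact (abs_lt.2 ⟨neg_one_lt_tanh x, tanh_lt_one x⟩).le

@[fun_prop]
theorem continuous_tanh : Continuous tanh := by
  simp_rw [funext tanh_eq_sinh_div_cosh]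
  exact continuous_sinh.div continuous_cosh fun x => (cosh_pos x).ne'

theorem tanh_add_log_sub_log_div_two {A B : ℝ} (hA : 0 < A) (hB : 0 < B) (x : ℝ) :
    tanh (x + (log A - log B) / 2) = (A * exp x - B * exp (-x)) / (A * exp x + B * exp (-x)) := by
  set s := exp ((log A - log B) / 2) with hs_def
  have hs : s ^ 2 * B = A := by
    rw [sq, ← exp_add, add_halves, exp_sub, exp_log hA, exp_log hB, div_mul_cancel₀ _ hB.ne']
  have hs0 : 0 < s := exp_pos _
  rw [tanh_eq, neg_add, exp_add, exp_add, exp_neg ((log A - log B) / 2), ← hs_def, ← hs]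
  field_simp

end Real

theorem gaussianPDFReal_zero_le_of_abs_le {v : ℝ≥0} {a b : ℝ} (h : |a| ≤ |b|) :
    gaussianPDFReal 0 v b ≤ gaussianPDFReal 0 v a := by
  simp only [gaussianPDFReal, sub_zero]
  gcongr ?_ * exp (-?_ / _)
  exact sq_le_sq.2 h

theorem le_lintegral_pi_of_le_lintegral_update {ι : Type*} [Fintype ι] [DecidableEq ι]
    {X : ι → Type*} [∀ i, MeasurableSpace (X i)] (μ : ∀ i, Measure (X i))
    [∀ i, IsProbabilityMeasure (μ i)] (i : ι) {f : (∀ j, X j) → ℝ≥0∞} (hf : Measurable f)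
    {c : ℝ≥0∞} (h : ∀ x, c ≤ ∫⁻ t, f (Function.update x i t) ∂μ i) :
    c ≤ ∫⁻ x, f x ∂Measure.pi μ :=
  calc c = ∫⁻ _, c ∂Measure.pi μ := by simp
    _ ≤ _ := lintegral_le_of_lmarginal_le {i} measurable_const hf fun x => by
      simpa [lmarginal_singleton] using h x

section Anderson

variable {T φ : ℝ → ℝ}

theorem sub_mul_sub_nonneg_of_abs_mono_of_abs_anti (hT : ∀ a b, |a| ≤ |b| → T a ≤ T b)
    (hφ : ∀ a b, |a| ≤ |b| → φ b ≤ φ a) (a b : ℝ) : 0 ≤ (T a - T b) * (φ b - φ a) := by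
  rcases le_total |a| |b| with h | h
  · exact mul_nonneg_of_nonpos_of_nonpos (sub_nonpos.2 (hT a b h)) (sub_nonpos.2 (hφ a b h))
  · exact mul_nonneg (sub_nonneg.2 (hT b a h)) (sub_nonneg.2 (hφ b a h))

theorem integral_mul_le_integral_mul_sub (hT : ∀ a b, |a| ≤ |b| → T a ≤ T b)
    (hTm : AEStronglyMeasurable T) {C : ℝ} (hTC : ∀ x, |T x| ≤ C)
    (hφ : ∀ a b, |a| ≤ |b| → φ b ≤ φ a) (hφi : Integrable φ) (m : ℝ) :
    ∫ x, T x * φ x ≤ ∫ x, T x * φ (x - m) := by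
  have hφ_even : ∀ x, φ (-x) = φ x := fun x =>
    le_antisymm (hφ x (-x) (abs_neg x).ge) (hφ (-x) x (abs_neg x).le)
  have hTr : AEStronglyMeasurable fun x => T (m - x) :=
    hTm.comp_quasiMeasurePreserving (quasiMeasurePreserving_sub_left volume m)
  have hφm : Integrable fun x => φ (x - m) := hφi.comp_sub_right m
  have hbd : ∀ᵐ x, ‖T x‖ ≤ C := ae_of_all _ hTC
  have hbdr : ∀ᵐ x, ‖T (m - x)‖ ≤ C := ae_of_all _ fun x => hTC (m - x)
  have hint₁ : Integrable fun x => T x * (φ (x - m) - φ x) := (hφm.sub hφi).bdd_mul hTm hbd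
  have hint₂ : Integrable fun x => T (m - x) * (φ x - φ (x - m)) :=
    (hφi.sub hφm).bdd_mul hTr hbdr
  have hreflect : ∫ x, T x * (φ (x - m) - φ x) = ∫ x, T (m - x) * (φ x - φ (x - m)) := by
    rw [← integral_sub_left_eq_self _ _ m]
    congr 1
    funext x
    rw [sub_sub_cancel_left, hφ_even, ← neg_sub m x, hφ_even]
  have hsum : 0 ≤ (∫ x, T x * (φ (x - m) - φ x)) + ∫ x, T (m - x) * (φ x - φ (x - m)) := by
    rw [← integral_add hint₁ hint₂]
    refine integral_nonneg fun x => ?_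
    have := sub_mul_sub_nonneg_of_abs_mono_of_abs_anti hT hφ x (m - x)
    rw [show φ (m - x) = φ (x - m) by rw [← neg_sub, hφ_even]] at this
    show 0 ≤ _
    linarith
  have hsplit : ∫ x, T x * (φ (x - m) - φ x) = (∫ x, T x * φ (x - m)) - ∫ x, T x * φ x := by
    simp only [mul_sub]
    exact integral_sub (hφm.bdd_mul hTm hbd) (hφi.bdd_mul hTm hbd)
  linarith

theorem integral_gaussianReal_zero_le (hT : ∀ a b, |a| ≤ |b| → T a ≤ T b)
    (hTm : Measurable T) {C : ℝ} (hTC : ∀ x, |T x| ≤ C) (m : ℝ) (v : ℝ≥0) :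
    ∫ x, T x ∂gaussianReal 0 v ≤ ∫ x, T x ∂gaussianReal m v := by
  rcases eq_or_ne v 0 with rfl | hv
  · simpa [gaussianReal_zero_var] using hT 0 m (by simp)
  simp only [integral_gaussianReal_eq_integral_smul hv, smul_eq_mul,
    mul_comm (gaussianPDFReal _ _ _)]
  simpa [gaussianPDFReal_sub] using integral_mul_le_integral_mul_sub hT hTm.aestronglyMeasurable
    hTC (fun a b => gaussianPDFReal_zero_le_of_abs_le) (integrable_gaussianPDFReal 0 v) m

end Anderson

theorem integral_tanh_sq_gaussianReal_le (β c m : ℝ) (v : ℝ≥0) :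
    ∫ x, tanh (β * x) ^ 2 ∂gaussianReal 0 v ≤ ∫ x, tanh (β * x + c) ^ 2 ∂gaussianReal m v := by
  have hmap : ∀ μ s, ∫ x, tanh (β * x + s) ^ 2 ∂gaussianReal μ v
      = ∫ y, tanh y ^ 2 ∂(((gaussianReal μ v).map (β * ·)).map (· + s)) := by
    intro μ s
    rw [Measure.map_map (by fun_prop) (by fun_prop), integral_map (by fun_prop)
      (by fun_prop : Continuous fun y => tanh y ^ 2).aestronglyMeasurable]
    rfl
  calc ∫ x, tanh (β * x) ^ 2 ∂gaussianReal 0 v = ∫ x, tanh (β * x + 0) ^ 2 ∂gaussianReal 0 v := by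
        simp_rw [add_zero]
    _ ≤ _ := by
      rw [hmap, hmap, gaussianReal_map_const_mul, gaussianReal_map_const_mul,
        gaussianReal_map_add_const, gaussianReal_map_add_const, mul_zero, zero_add]
      exact integral_gaussianReal_zero_le (fun a b => tanh_sq_le_tanh_sq_of_abs_le)
        (by fun_prop) abs_tanh_sq_le_one _ _

section Cavity

variable {V : Type} [Fintype V] [DecidableEq V] (β : ℝ) (ℬ : Finset (Finset V)) (J : ℬ → ℝ)

noncomputable def boltzmannWeight (h : V → ℝ) (σ : V → Bool) : ℝ :=
  exp (β * ((∑ B : ℬ, J B * sigmaSet σ (B : Finset V)) + ∑ j, h j * spinVal (σ j)))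

noncomputable def cavityWeight (h : V → ℝ) (i : V) (b : Bool) : ℝ :=
  ∑ σ with σ i = b, boltzmannWeight β ℬ J (Function.update h i 0) σ

noncomputable def cavityField (h : V → ℝ) (i : V) : ℝ :=
  (log (cavityWeight β ℬ J h i true) - log (cavityWeight β ℬ J h i false)) / 2

theorem boltzmannWeight_eq_update_mul (h : V → ℝ) (i : V) (σ : V → Bool) :
    boltzmannWeight β ℬ J h σ
      = boltzmannWeight β ℬ J (Function.update h i 0) σ * exp (β * (h i * spinVal (σ i))) := by
  rw [boltzmannWeight, boltzmannWeight, ← exp_add, ← mul_add, add_assoc,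
    ← Finset.add_sum_erase _ _ (mem_univ i), ← Finset.add_sum_erase _ _ (mem_univ i)]
  congr 3
  rw [Function.update_self, zero_mul, zero_add, add_comm]
  congr 1
  refine sum_congr rfl fun j hj => ?_
  rw [Function.update_of_ne (ne_of_mem_erase hj)]

theorem cavityWeight_pos (h : V → ℝ) (i : V) (b : Bool) : 0 < cavityWeight β ℬ J h i b :=
  sum_pos (fun _ _ => exp_pos _) ⟨fun _ => b, by simp⟩

theorem cavityField_update (h : V → ℝ) (i : V) (t : ℝ) :
    cavityField β ℬ J (Function.update h i t) i = cavityField β ℬ J h i := by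
  simp only [cavityField, cavityWeight, Function.update_idem]

theorem sum_mul_boltzmannWeight (h : V → ℝ) (i : V) (g : Bool → ℝ) :
    ∑ σ, g (σ i) * boltzmannWeight β ℬ J h σ
      = g true * exp (β * h i) * cavityWeight β ℬ J h i true
        + g false * exp (-(β * h i)) * cavityWeight β ℬ J h i false := by
  rw [← sum_fiberwise univ (fun σ => σ i), Fintype.sum_bool]
  congr 1 <;>
  · rw [cavityWeight, mul_sum]
    refine sum_congr rfl fun σ hσ => ?_
    rw [boltzmannWeight_eq_update_mul β ℬ J h i, (mem_filter.1 hσ).2]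
    simp only [spinVal, Bool.false_eq_true, ↓reduceIte, mul_neg, mul_one]
    ring

theorem rfGibbs_eq_tanh (h : V → ℝ) (i : V) :
    rfGibbs β ℬ J h i = tanh (β * h i + cavityField β ℬ J h i) := by
  have hden := sum_mul_boltzmannWeight β ℬ J h i 1
  simp only [Pi.one_apply, one_mul] at hden
  rw [cavityField, tanh_add_log_sub_log_div_two (cavityWeight_pos ..) (cavityWeight_pos ..)]
  change (∑ σ, spinVal (σ i) * boltzmannWeight β ℬ J h σ) / ∑ σ, boltzmannWeight β ℬ J h σ = _
  rw [sum_mul_boltzmannWeight, hden]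
  simp only [spinVal, ↓reduceIte, one_mul, Bool.false_eq_true, neg_mul]
  ring

theorem measurable_rfGibbs (i : V) :
    Measurable fun p : (ℬ → ℝ) × (V → ℝ) => rfGibbs β ℬ p.1 p.2 i := by
  unfold rfGibbs
  fun_prop

end Cavity

theorem ofReal_le_lintegral_rfGibbs_sq {V : Type} [Fintype V] [DecidableEq V] (β : ℝ)
    (ℬ : Finset (Finset V)) (J : ℬ → ℝ) (J0 : ℝ) (v : ℝ≥0) (i : V) :
    ENNReal.ofReal (∫ x, tanh (β * x) ^ 2 ∂gaussianReal 0 v)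
      ≤ ∫⁻ h, ENNReal.ofReal (rfGibbs β ℬ J h i ^ 2)
          ∂Measure.pi fun _ : V => gaussianReal J0 v := by
  have hmeas : Measurable fun h => ENNReal.ofReal (rfGibbs β ℬ J h i ^ 2) :=
    (((measurable_rfGibbs β ℬ i).comp measurable_prodMk_left).pow_const 2).ennreal_ofReal
  refine le_lintegral_pi_of_le_lintegral_update _ i hmeas fun h => ?_
  simp_rw [rfGibbs_eq_tanh, cavityField_update, Function.update_self]
  have hint : Integrable (fun t => tanh (β * t + cavityField β ℬ J h i) ^ 2) (gaussianReal J0 v) :=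
    .of_bound (by fun_prop) 1 (ae_of_all _ fun _ => abs_tanh_sq_le_one _)
  rw [← ofReal_integral_eq_lintegral_ofReal hint (ae_of_all _ fun _ => sq_nonneg _)]
  exact ENNReal.ofReal_le_ofReal (integral_tanh_sq_gaussianReal_le β _ J0 v)

theorem random_field_local_magnetization_square_lower_bound_general
    {V : Type} [Fintype V] [DecidableEq V]
    (ℬ : Finset (Finset V))
    (β : ℝ)
    (ν : Measure (ℬ → ℝ)) [IsProbabilityMeasure ν]
    (J0 : ℝ) (Λ : NNReal)
    (i : V) :
    ∫ x, Real.tanh (β * x) ^ 2 ∂(gaussianReal 0 (Λ ^ 2))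
      ≤ ∫ p, rfGibbs β ℬ p.1 p.2 i ^ 2
          ∂(ν.prod (Measure.pi fun _ : V => gaussianReal J0 (Λ ^ 2))) := by
  have hmeas : Measurable fun p : (ℬ → ℝ) × (V → ℝ) => rfGibbs β ℬ p.1 p.2 i ^ 2 :=
    (measurable_rfGibbs β ℬ i).pow_const 2
  have hint : Integrable (fun p : (ℬ → ℝ) × (V → ℝ) => rfGibbs β ℬ p.1 p.2 i ^ 2)
      (ν.prod (Measure.pi fun _ : V => gaussianReal J0 (Λ ^ 2))) :=
    .of_bound hmeas.aestronglyMeasurable 1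
      (ae_of_all _ fun p => by
        simpa only [rfGibbs_eq_tanh, Real.norm_eq_abs] using abs_tanh_sq_le_one _)
  rw [← ENNReal.ofReal_le_ofReal_iff (integral_nonneg fun _ => sq_nonneg _),
    ofReal_integral_eq_lintegral_ofReal hint (ae_of_all _ fun _ => sq_nonneg _),
    lintegral_prod _ hmeas.ennreal_ofReal.aemeasurable]
  calc _ = ∫⁻ _, ENNReal.ofReal (∫ x, tanh (β * x) ^ 2 ∂gaussianReal 0 (Λ ^ 2)) ∂ν := by simp
    _ ≤ _ := lintegral_mono fun J => ofReal_le_lintegral_rfGibbs_sq β ℬ J J0 _ i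

/-- **Random-field Ising model.** With arbitrary (deterministic or random) interactions
`J_B` on sets of size at least two, distributed according to any probability measure `ν`,
and independent i.i.d. Gaussian fields `h_i ~ N(J_0, Λ²)`, the quenched average of the
square of the local magnetization satisfies
`E[tanh²(βh)]_{N(0, Λ²)} ≤ E[⟨σ_i⟩²]` for every site `i`. -/
theorem random_field_local_magnetization_square_lower_bound
    {V : Type} [Fintype V] [DecidableEq V]
    (ℬ : Finset (Finset V)) (hℬ : ∀ B ∈ ℬ, 2 ≤ B.card)
    (β : ℝ) (hβ : 0 < β)
    (ν : Measure (ℬ → ℝ)) [IsProbabilityMeasure ν]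
    (J0 : ℝ) (Λ : NNReal) (hΛ : 0 < Λ)
    (i : V) :
    ∫ x, Real.tanh (β * x) ^ 2 ∂(gaussianReal 0 (Λ ^ 2))
      ≤ ∫ p, rfGibbs β ℬ p.1 p.2 i ^ 2
          ∂(ν.prod (Measure.pi fun _ : V => gaussianReal J0 (Λ ^ 2))) :=
  random_field_local_magnetization_square_lower_bound_general ℬ β ν J0 Λ i
end
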